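/- arXiv:1301.3375 — 2 statements merged into one kernel-verified Lean document; each statement's English description precedes it below -/
import Mathlib

section
/- Let c ∈ ℝ^K be a nonnegative nonincreasing sequence with ‖c‖₂ = 1, and let Φ = (φ₁,…,φ_K) be a collection of unit vectors in ℝ^d with coherence μ = max_{i≠j} |⟨φ_i, φ_j⟩|. For any permutation p of {1,…,K} and any sign sequence σ ∈ {−1,1}^K, set x = c_{p,σ} where x(i) = σ_i c_{p(i)}, and let i_p = p⁻¹(1). Then |⟨φ_{i_p}, Φx⟩| ≥ c₁ − μ‖c‖₁, and for every i ≠ i_p, |⟨φ_i, Φx⟩| ≤ c₂ + μ‖c‖₁. In particular, if c₁ > c₂ + 2μ‖c‖₁ then max_{i} |⟨φ_i, Φx⟩| = |⟨φ_{i_p}, Φx⟩|. -/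
open scoped RealInnerProductSpace BigOperators

/-!
Since `φ i` is a unit vector, `⟪φ i, Φ x⟫ = x i + ∑_{j ≠ i} x j ⟪φ i, φ j⟫`, and the cross terms are
at most `μ ∑ |x j| = μ ‖c‖₁` in absolute value. The entry `x i_p` has modulus `c₁`, every other
entry has modulus at most `c₂`, so the two bounds follow, and their gap gives the maximality.
-/

section Coherence

variable {ι E : Type*} [Fintype ι] [DecidableEq ι] [NormedAddCommGroup E] [InnerProductSpace ℝ E]
  {φ : ι → E} {μ : ℝ}

theorem inner_sum_smul_sub_eq_sum_erase {i : ι} (hφ : ‖φ i‖ = 1) (a : ι → ℝ) :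
    ⟪φ i, ∑ j, a j • φ j⟫ - a i = ∑ j ∈ Finset.univ.erase i, a j * ⟪φ i, φ j⟫ := by
  have hii : ⟪φ i, φ i⟫ = 1 := by rw [real_inner_self_eq_norm_sq, hφ, one_pow]
  simp only [inner_sum, real_inner_smul_right]
  rw [← Finset.add_sum_erase _ _ (Finset.mem_univ i), hii, mul_one, add_sub_cancel_left]

theorem abs_inner_sum_smul_sub_le {i : ι} (hφ : ‖φ i‖ = 1) (hμ0 : 0 ≤ μ)
    (hμ : ∀ j, j ≠ i → |⟪φ i, φ j⟫| ≤ μ) (a : ι → ℝ) :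
    |⟪φ i, ∑ j, a j • φ j⟫ - a i| ≤ μ * ∑ j, |a j| := by
  rw [inner_sum_smul_sub_eq_sum_erase hφ, Finset.mul_sum]
  calc |∑ j ∈ Finset.univ.erase i, a j * ⟪φ i, φ j⟫|
      ≤ ∑ j ∈ Finset.univ.erase i, |a j * ⟪φ i, φ j⟫| := Finset.abs_sum_le_sum_abs _ _
    _ ≤ ∑ j ∈ Finset.univ.erase i, μ * |a j| := by
        refine Finset.sum_le_sum fun j hj => ?_
        rw [abs_mul, mul_comm μ]
        exact mul_le_mul_of_nonneg_left (hμ j (Finset.ne_of_mem_erase hj)) (abs_nonneg _)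
    _ ≤ ∑ j, μ * |a j| :=
        Finset.sum_le_sum_of_subset_of_nonneg (Finset.subset_univ _)
          fun j _ _ => mul_nonneg hμ0 (abs_nonneg _)

end Coherence

theorem abs_sign_mul {σ : ℝ} (hσ : σ = 1 ∨ σ = -1) (t : ℝ) : |σ * t| = |t| := by
  rcases hσ with rfl | rfl <;> simp

/-- bounds on inner products with the generating dictionary for a
signal `y = Φ c_{p,σ}` with decaying coefficients. -/
theorem ksvd_inner_product_bounds {d K : ℕ} (hK : 2 ≤ K)
    (φ : Fin K → EuclideanSpace ℝ (Fin d)) (hφ : ∀ i, ‖φ i‖ = 1)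
    (μ : ℝ) (hμ : ∀ i j : Fin K, i ≠ j → |(⟪φ i, φ j⟫)| ≤ μ)
    (c : Fin K → ℝ) (hc0 : ∀ i, 0 ≤ c i) (hmono : ∀ i j : Fin K, i ≤ j → c j ≤ c i)
    (p : Equiv.Perm (Fin K)) (σ : Fin K → ℝ) (hσ : ∀ i, σ i = 1 ∨ σ i = -1)
    (x : Fin K → ℝ) (hx : ∀ i, x i = σ i * c (p i))
    (y : EuclideanSpace ℝ (Fin d)) (hy : y = ∑ j, x j • φ j)
    (ip : Fin K) (hip : ip = p.symm ⟨0, by omega⟩) :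
    (c ⟨0, by omega⟩ - μ * ∑ j, c j ≤ |(⟪φ ip, y⟫)|) ∧
    (∀ i, i ≠ ip → |(⟪φ i, y⟫)| ≤ c ⟨1, by omega⟩ + μ * ∑ j, c j) ∧
    (c ⟨1, by omega⟩ + 2 * μ * (∑ j, c j) < c ⟨0, by omega⟩ →
      ∀ i, |(⟪φ i, y⟫)| ≤ |(⟪φ ip, y⟫)|) := by
  have habs : ∀ j, |x j| = c (p j) := fun j => by
    rw [hx, abs_sign_mul (hσ j), abs_of_nonneg (hc0 _)]
  have hμ0 : 0 ≤ μ := (abs_nonneg _).trans (hμ ⟨0, by omega⟩ ⟨1, by omega⟩ (by simp))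
  have hdev : ∀ i, |⟪φ i, y⟫ - x i| ≤ μ * ∑ j, c j := fun i => by
    have h := abs_inner_sum_smul_sub_le (hφ i) hμ0 (fun j hj => hμ i j hj.symm) x
    rwa [← hy, Finset.sum_congr rfl fun j _ => habs j, Equiv.sum_comp p c] at h
  have hlow : c ⟨0, by omega⟩ - μ * ∑ j, c j ≤ |⟪φ ip, y⟫| := by
    have h := abs_sub_abs_le_abs_sub (x ip) ⟪φ ip, y⟫
    rw [abs_sub_comm, habs, hip, Equiv.apply_symm_apply, ← hip] at h
    linarith [hdev ip]
  have hupp : ∀ i, i ≠ ip → |⟪φ i, y⟫| ≤ c ⟨1, by omega⟩ + μ * ∑ j, c j := fun i hi => by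
    have hpi : (p i).val ≠ 0 := fun h => hi (by rw [hip, Equiv.eq_symm_apply]; exact Fin.ext h)
    have hci : c (p i) ≤ c ⟨1, by omega⟩ := hmono _ _ (Fin.mk_le_of_le_val (by omega))
    linarith [abs_sub_abs_le_abs_sub ⟪φ i, y⟫ (x i), hdev i, habs i]
  refine ⟨hlow, hupp, fun hgap i => ?_⟩
  rcases eq_or_ne i ip with rfl | hi
  · exact le_rfl
  · linarith [hupp i hi]
end

section
/- Let V = Σ_i σ_i v_i be a Rademacher series with vectors v_i ∈ ℝ^n and σ_i independent uniform ±1 variables. Then for every t > 0, P(‖V‖₂ > t) ≤ 2 exp(−t² / (32 E ‖V‖₂²)) = 2 exp(−t² / (32 Σ_i ‖v_i‖₂²)). -/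
/-!
Peel off one sign at a time. Since `‖w ± u‖² = ‖w‖² + ‖u‖² ± 2⟪w, u⟫` and `|⟪w, u⟫| ≤ ‖w‖ ‖u‖`,
each term of the power series of `cosh` gives
`cosh (r‖w + u‖) + cosh (r‖w - u‖) ≤ cosh (r(‖w‖ + ‖u‖)) + cosh (r(‖w‖ - ‖u‖)) = 2 cosh (r‖w‖) cosh (r‖u‖)`.
By induction, `E cosh (r‖V‖) ≤ ∏ cosh (r‖vᵢ‖) ≤ exp (r² S / 2)` with `S = ∑ ‖vᵢ‖²`. Markov's inequality
with `r = t / S` then gives `P(‖V‖ > t) ≤ 2 exp (-t² / (2S))`, which is stronger than the bound claimed.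
The same induction with the parallelogram law gives `E‖V‖² = S`.
-/

open Finset Real

lemma add_pow_neg_pow_le {c d : ℝ} (h : |c| ≤ d) (i : ℕ) : c ^ i + (-c) ^ i ≤ d ^ i + (-d) ^ i := by
  rcases i.even_or_odd with hi | hi
  · rw [hi.neg_pow, hi.neg_pow, ← hi.pow_abs c]
    gcongr
  · simp [hi.neg_pow]

-- Only even powers of `c` survive in the binomial expansion, and each is monotone in `|c|`.
lemma add_pow_add_sub_pow_le {a c d : ℝ} (ha : 0 ≤ a) (h : |c| ≤ d) (n : ℕ) :
    (a + c) ^ n + (a - c) ^ n ≤ (a + d) ^ n + (a - d) ^ n := by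
  have expand : ∀ x : ℝ, (a + x) ^ n + (a - x) ^ n
      = ∑ i ∈ range (n + 1), (x ^ i + (-x) ^ i) * (a ^ (n - i) * n.choose i) := by
    intro x
    rw [sub_eq_add_neg, add_comm a, add_comm a, add_pow, add_pow, ← sum_add_distrib]
    exact sum_congr rfl fun i _ => by ring
  rw [expand, expand]
  gcongr ∑ i ∈ _, ?_ * _ with i
  exact add_pow_neg_pow_le h i

lemma prod_cosh_le_exp_sum {ι : Type*} (s : Finset ι) (x : ι → ℝ) :
    ∏ i ∈ s, cosh (x i) ≤ exp ((∑ i ∈ s, x i ^ 2) / 2) := by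
  rw [sum_div, exp_sum]
  exact prod_le_prod (fun i _ => (cosh_pos _).le) fun i _ => cosh_le_exp_half_sq _

section InnerProductSpace

variable {E : Type*} [NormedAddCommGroup E] [InnerProductSpace ℝ E]

lemma norm_add_pow_add_norm_sub_pow_le (w u : E) (n : ℕ) :
    ‖w + u‖ ^ (2 * n) + ‖w - u‖ ^ (2 * n)
      ≤ (‖w‖ + ‖u‖) ^ (2 * n) + (‖w‖ - ‖u‖) ^ (2 * n) := by
  have hinner : |2 * inner ℝ w u| ≤ 2 * (‖w‖ * ‖u‖) := by
    rw [abs_mul, abs_two]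
    exact mul_le_mul_of_nonneg_left (abs_real_inner_le_norm w u) zero_le_two
  have key := add_pow_add_sub_pow_le (by positivity : 0 ≤ ‖w‖ ^ 2 + ‖u‖ ^ 2) hinner n
  simp only [pow_mul, norm_add_sq_real, norm_sub_sq_real, add_sq, sub_sq]
  convert key using 3 <;> ring

lemma cosh_norm_add_add_cosh_norm_sub_le (r : ℝ) (w u : E) :
    cosh (r * ‖w + u‖) + cosh (r * ‖w - u‖) ≤ 2 * cosh (r * ‖w‖) * cosh (r * ‖u‖) := by
  have hrhs : 2 * cosh (r * ‖w‖) * cosh (r * ‖u‖)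
      = cosh (r * (‖w‖ + ‖u‖)) + cosh (r * (‖w‖ - ‖u‖)) := by
    rw [mul_add, mul_sub, cosh_add, cosh_sub]; ring
  rw [hrhs]
  refine hasSum_le (fun n => ?_) ((hasSum_cosh _).add (hasSum_cosh _))
    ((hasSum_cosh _).add (hasSum_cosh _))
  simp only [mul_pow, ← add_div, ← mul_add]
  gcongr _ * ?_ / _
  · exact (even_two_mul n).pow_nonneg r
  · exact norm_add_pow_add_norm_sub_pow_le w u n

def rademacherSum {ι : Type*} [Fintype ι] (v : ι → E) (σ : ι → Bool) : E :=
  ∑ i, (if σ i then (1 : ℝ) else -1) • v i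

lemma sum_rademacherSum_succ {M : Type*} [AddCommMonoid M] {m : ℕ} (f : E → M)
    (v : Fin (m + 1) → E) :
    ∑ σ, f (rademacherSum v σ) = ∑ σ, (f (rademacherSum (Fin.tail v) σ + v 0)
      + f (rademacherSum (Fin.tail v) σ - v 0)) := by
  rw [← (Fin.consEquiv fun _ => Bool).sum_comp, Fintype.sum_prod_type_right]
  refine sum_congr rfl fun σ _ => ?_
  simp [Fin.consEquiv, rademacherSum, Fin.sum_univ_succ, Fin.tail, add_comm, sub_eq_neg_add]

lemma sum_norm_rademacherSum_sq {m : ℕ} (v : Fin m → E) :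
    ∑ σ, ‖rademacherSum v σ‖ ^ 2 = 2 ^ m * ∑ i, ‖v i‖ ^ 2 := by
  induction m with
  | zero => simp [rademacherSum]
  | succ m ih =>
    have hpar : ∀ w : E, ‖w + v 0‖ ^ 2 + ‖w - v 0‖ ^ 2 = 2 * ‖w‖ ^ 2 + 2 * ‖v 0‖ ^ 2 := by
      intro w; rw [norm_add_sq_real, norm_sub_sq_real]; ring
    simp only [sum_rademacherSum_succ (‖·‖ ^ 2), hpar, sum_add_distrib, ← mul_sum, ih,
      Fin.sum_univ_succ, sum_const, card_univ, Fintype.card_fun, Fintype.card_bool,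
      Fintype.card_fin, nsmul_eq_mul]
    push_cast
    simp only [Fin.tail]
    ring

lemma sum_cosh_norm_rademacherSum_le (r : ℝ) {m : ℕ} (v : Fin m → E) :
    ∑ σ, cosh (r * ‖rademacherSum v σ‖) ≤ 2 ^ m * ∏ i, cosh (r * ‖v i‖) := by
  induction m with
  | zero => simp [rademacherSum]
  | succ m ih =>
    rw [sum_rademacherSum_succ (fun x => cosh (r * ‖x‖)), Fin.prod_univ_succ]
    calc _ ≤ ∑ σ, 2 * cosh (r * ‖v 0‖) * cosh (r * ‖rademacherSum (Fin.tail v) σ‖) := by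
          refine sum_le_sum fun σ _ => ?_
          rw [mul_right_comm]
          exact cosh_norm_add_add_cosh_norm_sub_le r _ _
      _ ≤ 2 * cosh (r * ‖v 0‖) * (2 ^ m * ∏ i : Fin m, cosh (r * ‖v i.succ‖)) := by
          rw [← mul_sum]
          gcongr
          exact ih (Fin.tail v)
      _ = _ := by ring

lemma card_tail_rademacherSum_le {m : ℕ} (v : Fin m → E) {r t : ℝ} (hr : 0 ≤ r) (ht : 0 ≤ t) :
    (#{σ | t < ‖rademacherSum v σ‖} : ℝ) / 2 ^ m
      ≤ 2 * exp (r ^ 2 * (∑ i, ‖v i‖ ^ 2) / 2 - r * t) := by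
  have markov : #{σ | t < ‖rademacherSum v σ‖} * cosh (r * t)
      ≤ ∑ σ, cosh (r * ‖rademacherSum v σ‖) := by
    rw [← nsmul_eq_mul]
    refine (card_nsmul_le_sum _ _ _ fun σ hσ => ?_).trans
      (sum_le_sum_of_subset_of_nonneg (filter_subset _ _) fun σ _ _ => (cosh_pos _).le)
    have htail : t ≤ ‖rademacherSum v σ‖ := (mem_filter.1 hσ).2.le
    rw [cosh_le_cosh, abs_of_nonneg (by positivity), abs_of_nonneg (by positivity)]
    exact mul_le_mul_of_nonneg_left htail hr
  have hmgf : ∑ σ, cosh (r * ‖rademacherSum v σ‖)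
      ≤ 2 ^ m * exp (r ^ 2 * (∑ i, ‖v i‖ ^ 2) / 2) := by
    refine (sum_cosh_norm_rademacherSum_le r v).trans
      (mul_le_mul_of_nonneg_left ?_ (by positivity))
    refine (prod_cosh_le_exp_sum univ fun i => r * ‖v i‖).trans_eq ?_
    simp only [mul_pow, ← mul_sum]
  have hcosh : exp (r * t) ≤ 2 * cosh (r * t) := by
    rw [cosh_eq]; linarith [exp_pos (-(r * t))]
  have hcount : #{σ | t < ‖rademacherSum v σ‖} * exp (r * t)
      ≤ 2 * 2 ^ m * exp (r ^ 2 * (∑ i, ‖v i‖ ^ 2) / 2) := by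
    calc _ ≤ #{σ | t < ‖rademacherSum v σ‖} * (2 * cosh (r * t)) := by gcongr
      _ = 2 * (#{σ | t < ‖rademacherSum v σ‖} * cosh (r * t)) := by ring
      _ ≤ 2 * (2 ^ m * exp (r ^ 2 * (∑ i, ‖v i‖ ^ 2) / 2)) := by
          gcongr 2 * ?_; exact markov.trans hmgf
      _ = _ := by ring
  rw [exp_sub, mul_div_assoc', div_le_div_iff₀ (by positivity) (exp_pos _)]
  linarith

end InnerProductSpace

/-- vector-valued Hoeffding-type inequality for Rademacher series,
together with the identity `E‖V‖² = Σ_i ‖v_i‖²`. -/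
theorem vector_rademacher_concentration {n m : ℕ}
    (v : Fin m → EuclideanSpace ℝ (Fin n)) (t : ℝ) (ht : 0 < t) :
    ((∑ σ : Fin m → Bool, ‖∑ i, (if σ i then (1 : ℝ) else -1) • v i‖ ^ 2) / 2 ^ m
        = ∑ i, ‖v i‖ ^ 2) ∧
    ((Finset.univ.filter fun σ : Fin m → Bool =>
        t < ‖∑ i, (if σ i then (1 : ℝ) else -1) • v i‖).card : ℝ) / 2 ^ m
      ≤ 2 * Real.exp (-t ^ 2 / (32 * ∑ i, ‖v i‖ ^ 2)) := by
  refine ⟨(div_eq_iff (by positivity)).2 ((sum_norm_rademacherSum_sq v).trans (mul_comm _ _)), ?_⟩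
  change (#{σ | t < ‖rademacherSum v σ‖} : ℝ) / 2 ^ m ≤ _
  rcases (by positivity : 0 ≤ ∑ i, ‖v i‖ ^ 2).eq_or_lt with hS | hS
  · -- `-t ^ 2 / (32 * 0) = 0`, so the claim is the trivial bound, the case `r = 0` of the lemma.
    simpa [← hS] using card_tail_rademacherSum_le v le_rfl ht.le
  · calc _ ≤ 2 * exp ((t / ∑ i, ‖v i‖ ^ 2) ^ 2 * (∑ i, ‖v i‖ ^ 2) / 2
              - (t / ∑ i, ‖v i‖ ^ 2) * t) :=
          card_tail_rademacherSum_le v (by positivity) ht.le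
      _ = 2 * exp (-(t ^ 2 / (2 * ∑ i, ‖v i‖ ^ 2))) := by
          congr 2; field_simp; ring
      _ ≤ 2 * exp (-t ^ 2 / (32 * ∑ i, ‖v i‖ ^ 2)) := by
          rw [neg_div]
          gcongr
          norm_num
end
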